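/- Let d ≥ 1 be a natural number and R ≥ 1 a real number. Then for every real ℓ ≤ R², one has ∫_{−∞}^{ℓ} e^h (1 − h/R²)^{d−1} dh ≤ d! · e^ℓ · (max(−(ℓ − 1), 1))^{d−1}. -/

import Mathlib

/-! Integration by parts turns `∫_{-∞}^ℓ e^h (1 - c h)^(n+1) dh` into the boundary term
`e^ℓ (1 - c ℓ)^(n+1)` plus `c (n+1)` times the same integral with exponent `n`. When `0 ≤ c ≤ 1`
and `c ℓ ≤ 1`, the factor `1 - c ℓ` lies between `0` and `max (1 - ℓ) 1`, so induction on `n`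
bounds the integral by `(n+1)! e^ℓ (max (1 - ℓ) 1)^n`. Then take `c = R⁻²`. -/

open MeasureTheory Set Filter Topology Real

section ExpMulPow

variable (c : ℝ) (n : ℕ)

lemma tendsto_exp_mul_mul_one_sub_mul_pow_atBot {a : ℝ} (ha : 0 < a) :
    Tendsto (fun h : ℝ => exp (a * h) * (1 - c * h) ^ n) atBot (𝓝 0) := by
  have hneg : Tendsto (fun h : ℝ => -(a * h)) atBot atTop :=
    tendsto_neg_atBot_atTop.comp ((tendsto_const_mul_atBot_of_pos ha).mpr tendsto_id)
  refine ((Polynomial.tendsto_div_exp_atTop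
    ((1 + Polynomial.C (c / a) * Polynomial.X) ^ n)).comp hneg).congr fun h => ?_
  simp only [Function.comp_apply, Polynomial.eval_pow, Polynomial.eval_add,
    Polynomial.eval_one, Polynomial.eval_mul, Polynomial.eval_C, Polynomial.eval_X]
  rw [exp_neg, div_inv_eq_mul, mul_comm]
  congr 2
  field_simp
  ring

lemma integrableOn_exp_mul_one_sub_mul_pow_Iic (ℓ : ℝ) :
    IntegrableOn (fun h : ℝ => exp h * (1 - c * h) ^ n) (Iic ℓ) := by
  have hcont : Continuous fun h : ℝ => exp h * (1 - c * h) ^ n := by fun_prop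
  refine (hcont.continuousOn.locallyIntegrableOn measurableSet_Iic).integrableOn_of_isBigO_atBot
    (g := fun h => exp ((1 / 2) * h)) ?_
    ⟨Iic 0, Iic_mem_atBot 0, integrableOn_exp_mul_Iic (by norm_num) 0⟩
  -- `e^h (1 - c h)^n = e^(h/2) · (e^(h/2) (1 - c h)^n)`, and the second factor tends to `0`.
  have hbounded := (tendsto_exp_mul_mul_one_sub_mul_pow_atBot c n
    (by norm_num : (0 : ℝ) < 1 / 2)).isBigO_one ℝ
  refine ((Asymptotics.isBigO_refl (fun h : ℝ => exp ((1 / 2) * h)) atBot).mul hbounded).congr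
    (fun h => ?_) (fun h => mul_one _)
  rw [← mul_assoc, ← exp_add]
  ring_nf

lemma integral_exp_mul_one_sub_mul_pow_succ_Iic (ℓ : ℝ) :
    ∫ h in Iic ℓ, exp h * (1 - c * h) ^ (n + 1)
      = exp ℓ * (1 - c * ℓ) ^ (n + 1)
        + c * (n + 1) * ∫ h in Iic ℓ, exp h * (1 - c * h) ^ n := by
  have hderiv : ∀ x ∈ Iic ℓ, HasDerivAt (fun h : ℝ => exp h * (1 - c * h) ^ (n + 1))
      (exp x * (1 - c * x) ^ (n + 1) - c * (n + 1) * (exp x * (1 - c * x) ^ n)) x := by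
    intro x _
    have hpow := (((hasDerivAt_id' x).const_mul c).const_sub 1).fun_pow (n + 1)
    refine ((hasDerivAt_exp x).fun_mul hpow).congr_deriv ?_
    push_cast [Nat.add_sub_cancel]
    ring
  have hint := integrableOn_exp_mul_one_sub_mul_pow_Iic c (n + 1) ℓ
  have hint' := (integrableOn_exp_mul_one_sub_mul_pow_Iic c n ℓ).const_mul (c * (n + 1))
  have hlim : Tendsto (fun h : ℝ => exp h * (1 - c * h) ^ (n + 1)) atBot (𝓝 0) := by
    simpa using tendsto_exp_mul_mul_one_sub_mul_pow_atBot c (n + 1) one_pos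
  have hftc := integral_Iic_of_hasDerivAt_of_tendsto' hderiv (hint.sub hint') hlim
  rw [integral_sub hint hint', integral_const_mul, sub_zero] at hftc
  linarith

end ExpMulPow

lemma one_sub_mul_le_max_one_sub {c : ℝ} (hc0 : 0 ≤ c) (hc1 : c ≤ 1) (ℓ : ℝ) :
    1 - c * ℓ ≤ max (1 - ℓ) 1 := by
  rcases le_total 0 ℓ with hℓ | hℓ
  · exact le_max_of_le_right (by nlinarith)
  · exact le_max_of_le_left (by nlinarith)

theorem integral_exp_mul_one_sub_mul_pow_Iic_le {c ℓ : ℝ} (hc0 : 0 ≤ c) (hc1 : c ≤ 1)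
    (hcℓ : c * ℓ ≤ 1) (n : ℕ) :
    ∫ h in Iic ℓ, exp h * (1 - c * h) ^ n ≤ (n + 1).factorial * exp ℓ * max (1 - ℓ) 1 ^ n := by
  set M := max (1 - ℓ) 1
  have hM : 1 ≤ M := le_max_right _ _
  induction n with
  | zero => simp [integral_exp_Iic]
  | succ n ih =>
    have hnonneg : 0 ≤ ∫ h in Iic ℓ, exp h * (1 - c * h) ^ n := by
      refine setIntegral_nonneg measurableSet_Iic fun h hh => ?_
      have : c * h ≤ 1 := (mul_le_mul_of_nonneg_left hh hc0).trans hcℓ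
      have : 0 ≤ 1 - c * h := by linarith
      positivity
    have hboundary : (1 - c * ℓ) ^ (n + 1) ≤ M ^ (n + 1) :=
      pow_le_pow_left₀ (by linarith) (one_sub_mul_le_max_one_sub hc0 hc1 ℓ) _
    have hfac : (1 : ℝ) ≤ (n + 1).factorial := mod_cast (n + 1).factorial_pos
    rw [integral_exp_mul_one_sub_mul_pow_succ_Iic]
    calc exp ℓ * (1 - c * ℓ) ^ (n + 1) + c * (n + 1) * ∫ h in Iic ℓ, exp h * (1 - c * h) ^ n
        ≤ exp ℓ * M ^ (n + 1) + 1 * (n + 1) * ((n + 1).factorial * exp ℓ * M ^ n) := by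
          gcongr
      _ ≤ (n + 1).factorial * exp ℓ * M ^ (n + 1)
            + (n + 1) * ((n + 1).factorial * exp ℓ * M ^ (n + 1)) := by
          gcongr
          · exact le_mul_of_one_le_left (by positivity) hfac
          · exact (one_mul _).le
          · omega
      _ = (n + 1 + 1).factorial * exp ℓ * M ^ (n + 1) := by
          rw [Nat.factorial_succ (n + 1)]
          push_cast
          ring

theorem integral_exp_mul_pow_le_general (d : ℕ) (R : ℝ) (hR : 1 ≤ R)
    (ℓ : ℝ) (hℓ : ℓ ≤ R ^ 2) :
    (∫ h in Set.Iic ℓ, Real.exp h * (1 - h / R ^ 2) ^ (d - 1))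
      ≤ (Nat.factorial d : ℝ) * Real.exp ℓ * (max (-(ℓ - 1)) 1) ^ (d - 1) := by
  have hR2 : 1 ≤ R ^ 2 := one_le_pow₀ hR
  have hc1 : (R ^ 2)⁻¹ ≤ 1 := inv_le_one_of_one_le₀ hR2
  have hcℓ : (R ^ 2)⁻¹ * ℓ ≤ 1 := by
    rw [inv_mul_le_iff₀ (by positivity)]
    linarith
  have hfac : (d - 1 + 1).factorial = d.factorial := by cases d <;> rfl
  simpa only [div_eq_inv_mul, neg_sub, hfac] using
    integral_exp_mul_one_sub_mul_pow_Iic_le (by positivity) hc1 hcℓ (d - 1)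

theorem integral_exp_mul_pow_le (d : ℕ) (hd : 1 ≤ d) (R : ℝ) (hR : 1 ≤ R)
    (ℓ : ℝ) (hℓ : ℓ ≤ R ^ 2) :
    (∫ h in Set.Iic ℓ, Real.exp h * (1 - h / R ^ 2) ^ (d - 1))
      ≤ (Nat.factorial d : ℝ) * Real.exp ℓ * (max (-(ℓ - 1)) 1) ^ (d - 1) :=
  integral_exp_mul_pow_le_general d R hR ℓ hℓ
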